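/- arXiv:2509.11226 — 5 statements merged into one kernel-verified Lean document; each statement's English description precedes it below -/
import Mathlib

section
/- Assume g is monotone, i.e. a₁ ≤ a₂ and b₁ ≤ b₂ imply g(a₁,b₁) ≤ g(a₂,b₂). Then for every data list xs over X and every rule list rs, the dynamic-programming algorithm sodt_rec is correct for the size-constrained optimal decision tree problem: sodt_rec(xs, rs) is an element of genDTs(xs, rs), and E(sodt_rec(xs, rs)) ≤ E(t) for every tree t in genDTs(xs, rs). -/
/-!
Optimal substructure: since `g` is monotone, the node built from optimal subtrees is optimal
among all trees with the same root split, and a minimum over the splits of these per-split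
optima is optimal among all trees.
-/

open Classical

inductive DTree (X R : Type*) where
  | leaf : List X → DTree X R
  | node : DTree X R → R → DTree X R → DTree X R

/-- Structural objective: `E (leaf xs) = f xs`, `E (node u r v) = g (E u) (E v)`. -/
noncomputable def Eobj {X R : Type*} (f : List X → ℝ) (g : ℝ → ℝ → ℝ) : DTree X R → ℝ
  | .leaf xs => f xs
  | .node u _ v => g (Eobj f g u) (Eobj f g v)

/-- `inter xs S` is the sublist of elements of `xs` lying in `S`. -/
noncomputable def inter {X : Type*} (xs : List X) (S : Set X) : List X :=
  xs.filter fun x => decide (x ∈ S)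

/-- Brute-force generator of all proper decision trees with rule list `rs`. -/
noncomputable def genDTs {X R : Type*} (rplus : R → Set X)
    (splits : List R → List (List R × R × List R))
    (hperm : ∀ rs : List R, 2 ≤ rs.length →
      ∀ p ∈ splits rs, (p.1 ++ p.2.1 :: p.2.2).Perm rs) :
    List X → List R → List (DTree X R)
  | xs, [] => [DTree.leaf xs]
  | xs, [r] => [DTree.node (DTree.leaf (inter xs (rplus r))) r
      (DTree.leaf (inter xs (rplus r)ᶜ))]
  | xs, r1 :: r2 :: rest =>
      (splits (r1 :: r2 :: rest)).attach.flatMap fun p =>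
        (genDTs rplus splits hperm (inter xs (rplus p.1.2.1)) p.1.1).flatMap fun u =>
          (genDTs rplus splits hperm (inter xs (rplus p.1.2.1)ᶜ) p.1.2.2).map fun v =>
            DTree.node u p.1.2.1 v
termination_by xs rs => rs.length
decreasing_by
  all_goals
    have h := (hperm (r1 :: r2 :: rest) (by simp) p.1 p.2).length_eq
    simp [List.length_append] at h ⊢
    omega

/-- Dynamic-programming algorithm: same recursion, keeping an `E`-minimal tree. -/
noncomputable def sodtRec {X R : Type*} (rplus : R → Set X)
    (splits : List R → List (List R × R × List R))
    (hperm : ∀ rs : List R, 2 ≤ rs.length →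
      ∀ p ∈ splits rs, (p.1 ++ p.2.1 :: p.2.2).Perm rs)
    (minE : List (DTree X R) → DTree X R) :
    List X → List R → DTree X R
  | xs, [] => DTree.leaf xs
  | xs, [r] => DTree.node (DTree.leaf (inter xs (rplus r))) r
      (DTree.leaf (inter xs (rplus r)ᶜ))
  | xs, r1 :: r2 :: rest =>
      minE ((splits (r1 :: r2 :: rest)).attach.map fun p =>
        DTree.node (sodtRec rplus splits hperm minE (inter xs (rplus p.1.2.1)) p.1.1)
          p.1.2.1
          (sodtRec rplus splits hperm minE (inter xs (rplus p.1.2.1)ᶜ) p.1.2.2))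
termination_by xs rs => rs.length
decreasing_by
  all_goals
    have h := (hperm (r1 :: r2 :: rest) (by simp) p.1 p.2).length_eq
    simp [List.length_append] at h ⊢
    omega

def IsArgminIn {α : Type*} (E : α → ℝ) (l : List α) (a : α) : Prop :=
  a ∈ l ∧ ∀ b ∈ l, E a ≤ E b

theorem IsArgminIn.flatMap {ι α : Type*} {E : α → ℝ} {l : List ι} {L : ι → List α}
    {c : ι → α} (hc : ∀ i ∈ l, IsArgminIn E (L i) (c i)) {a : α}
    (ha : IsArgminIn E (l.map c) a) : IsArgminIn E (l.flatMap L) a := by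
  obtain ⟨i, hi, rfl⟩ := List.mem_map.1 ha.1
  refine ⟨List.mem_flatMap.2 ⟨i, hi, (hc i hi).1⟩, fun b hb => ?_⟩
  obtain ⟨j, hj, hbj⟩ := List.mem_flatMap.1 hb
  exact (ha.2 _ (List.mem_map_of_mem hj)).trans ((hc j hj).2 b hbj)

theorem IsArgminIn.node {X R : Type*} {f : List X → ℝ} {g : ℝ → ℝ → ℝ}
    (hg : ∀ a₁ a₂ b₁ b₂ : ℝ, a₁ ≤ a₂ → b₁ ≤ b₂ → g a₁ b₁ ≤ g a₂ b₂)
    {U V : List (DTree X R)} {u v : DTree X R} (hu : IsArgminIn (Eobj f g) U u)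
    (hv : IsArgminIn (Eobj f g) V v) (r : R) :
    IsArgminIn (Eobj f g) (U.flatMap fun u => V.map fun v => .node u r v) (.node u r v) := by
  refine ⟨List.mem_flatMap.2 ⟨u, hu.1, List.mem_map_of_mem hv.1⟩, fun t ht => ?_⟩
  obtain ⟨u', hu', v', hv', rfl⟩ : ∃ u' ∈ U, ∃ v' ∈ V, .node u' r v' = t := by
    simpa using ht
  exact hg _ _ _ _ (hu.2 u' hu') (hv.2 v' hv')

/-- correctness of the dynamic-programming algorithm `sodt_rec` for the
size-constrained optimal decision tree problem. -/
theorem stmt2 {X R : Type*} (rplus : R → Set X) (f : List X → ℝ) (g : ℝ → ℝ → ℝ)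
    (splits : List R → List (List R × R × List R))
    (hperm : ∀ rs : List R, 2 ≤ rs.length →
      ∀ p ∈ splits rs, (p.1 ++ p.2.1 :: p.2.2).Perm rs)
    (hne : ∀ rs : List R, 2 ≤ rs.length → splits rs ≠ [])
    (minE : List (DTree X R) → DTree X R)
    (hminE : ∀ l : List (DTree X R), l ≠ [] →
      minE l ∈ l ∧ ∀ t ∈ l, Eobj f g (minE l) ≤ Eobj f g t)
    (hg : ∀ a₁ a₂ b₁ b₂ : ℝ, a₁ ≤ a₂ → b₁ ≤ b₂ → g a₁ b₁ ≤ g a₂ b₂)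
    (xs : List X) (rs : List R) :
    sodtRec rplus splits hperm minE xs rs ∈ genDTs rplus splits hperm xs rs ∧
    ∀ t ∈ genDTs rplus splits hperm xs rs,
      Eobj f g (sodtRec rplus splits hperm minE xs rs) ≤ Eobj f g t := by
  change IsArgminIn (Eobj f g) (genDTs rplus splits hperm xs rs) _
  induction xs, rs using sodtRec.induct rplus splits hperm with
  | case1 xs => simp [IsArgminIn, sodtRec, genDTs]
  | case2 xs r => simp [IsArgminIn, sodtRec, genDTs]
  | case3 xs r1 r2 rest ih_pos ih_neg =>
    rw [sodtRec, genDTs]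
    refine IsArgminIn.flatMap (fun p _ => (ih_pos p).node hg (ih_neg p) p.1.2.1) (hminE _ ?_)
    simpa using hne _ (by simp)
end

section
/- Assume g is monotone, i.e. a₁ ≤ a₂ and b₁ ≤ b₂ imply g(a₁,b₁) ≤ g(a₂,b₂). Then for every depth d : ℕ and every data list xs over X, the dynamic-programming algorithm odt_depth is correct for the depth-constrained optimal decision tree problem: odt_depth(d, xs) is an element of genDTDs(d, xs), and E(odt_depth(d, xs)) ≤ E(t) for every tree t in genDTDs(d, xs). -/
open Classical

/-- Brute-force generator of all depth-`d` decision trees. -/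
noncomputable def genDTDs {X R : Type*} (rplus : R → Set X)
    (gensplits : List X → List R) : ℕ → List X → List (DTree X R)
  | 0, xs => [DTree.leaf xs]
  | d + 1, xs =>
      (gensplits xs).flatMap fun r =>
        (genDTDs rplus gensplits d (inter xs (rplus r))).flatMap fun u =>
          (genDTDs rplus gensplits d (inter xs (rplus r)ᶜ)).map fun v => DTree.node u r v

/-- Dynamic-programming algorithm for the depth-constrained problem. -/
noncomputable def odtDepth {X R : Type*} (rplus : R → Set X)
    (gensplits : List X → List R) (minE : List (DTree X R) → DTree X R) :
    ℕ → List X → DTree X R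
  | 0, xs => DTree.leaf xs
  | d + 1, xs =>
      minE ((gensplits xs).map fun r =>
        DTree.node (odtDepth rplus gensplits minE d (inter xs (rplus r))) r
          (odtDepth rplus gensplits minE d (inter xs (rplus r)ᶜ)))

/- Induction on the depth. A depth-`(d+1)` tree is a root split `r` with two depth-`d` subtrees
on the two halves of the data; the objective of such a node is monotone in the objectives of its
subtrees, so for a fixed `r` it is minimised by the optimal depth-`d` subtrees, which the
recursion supplies. Minimising once more over `r` gives the optimum over all depth-`(d+1)`
trees. -/

section DepthDP

variable {X R : Type*} (rplus : R → Set X) (gensplits : List X → List R)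

theorem mem_genDTDs_succ {d : ℕ} {xs : List X} {t : DTree X R} :
    t ∈ genDTDs rplus gensplits (d + 1) xs ↔
      ∃ r ∈ gensplits xs, ∃ u ∈ genDTDs rplus gensplits d (inter xs (rplus r)),
        ∃ v ∈ genDTDs rplus gensplits d (inter xs (rplus r)ᶜ), DTree.node u r v = t := by
  simp only [genDTDs, List.mem_flatMap, List.mem_map]

variable {gensplits} (hgs : ∀ xs : List X, gensplits xs ≠ [])
  {minE : List (DTree X R) → DTree X R}
include hgs

theorem odtDepth_mem_genDTDs (hmem : ∀ l : List (DTree X R), l ≠ [] → minE l ∈ l)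
    (d : ℕ) (xs : List X) :
    odtDepth rplus gensplits minE d xs ∈ genDTDs rplus gensplits d xs := by
  induction d generalizing xs with
  | zero => simp [odtDepth, genDTDs]
  | succ d ih =>
    obtain ⟨r, hr, hroot⟩ := List.mem_map.mp (hmem _ (by simpa using hgs xs))
    rw [odtDepth, ← hroot]
    exact (mem_genDTDs_succ rplus gensplits).mpr ⟨r, hr, _, ih _, _, ih _, rfl⟩

theorem Eobj_odtDepth_le {f : List X → ℝ} {g : ℝ → ℝ → ℝ}
    (hle : ∀ l : List (DTree X R), l ≠ [] → ∀ t ∈ l, Eobj f g (minE l) ≤ Eobj f g t)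
    (hg : ∀ a₁ a₂ b₁ b₂ : ℝ, a₁ ≤ a₂ → b₁ ≤ b₂ → g a₁ b₁ ≤ g a₂ b₂)
    (d : ℕ) (xs : List X) (t : DTree X R) (ht : t ∈ genDTDs rplus gensplits d xs) :
    Eobj f g (odtDepth rplus gensplits minE d xs) ≤ Eobj f g t := by
  induction d generalizing xs t with
  | zero =>
    rw [genDTDs, List.mem_singleton] at ht
    rw [ht, odtDepth]
  | succ d ih =>
    obtain ⟨r, hr, u, hu, v, hv, rfl⟩ := (mem_genDTDs_succ rplus gensplits).mp ht
    calc Eobj f g (odtDepth rplus gensplits minE (d + 1) xs)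
        ≤ Eobj f g (.node (odtDepth rplus gensplits minE d (inter xs (rplus r))) r
            (odtDepth rplus gensplits minE d (inter xs (rplus r)ᶜ))) := by
          rw [odtDepth]
          exact hle _ (by simpa using hgs xs) _ (List.mem_map_of_mem hr)
      _ ≤ Eobj f g (.node u r v) := hg _ _ _ _ (ih _ u hu) (ih _ v hv)

end DepthDP

/-- correctness of the dynamic-programming algorithm `odt_depth` for the
depth-constrained optimal decision tree problem. -/
theorem stmt3 {X R : Type*} (rplus : R → Set X) (f : List X → ℝ) (g : ℝ → ℝ → ℝ)
    (gensplits : List X → List R) (hgs : ∀ xs : List X, gensplits xs ≠ [])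
    (minE : List (DTree X R) → DTree X R)
    (hminE : ∀ l : List (DTree X R), l ≠ [] →
      minE l ∈ l ∧ ∀ t ∈ l, Eobj f g (minE l) ≤ Eobj f g t)
    (hg : ∀ a₁ a₂ b₁ b₂ : ℝ, a₁ ≤ a₂ → b₁ ≤ b₂ → g a₁ b₁ ≤ g a₂ b₂)
    (d : ℕ) (xs : List X) :
    odtDepth rplus gensplits minE d xs ∈ genDTDs rplus gensplits d xs ∧
    ∀ t ∈ genDTDs rplus gensplits d xs,
      Eobj f g (odtDepth rplus gensplits minE d xs) ≤ Eobj f g t :=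
  ⟨odtDepth_mem_genDTDs rplus hgs (fun l hl => (hminE l hl).1) d xs,
    Eobj_odtDepth_le rplus hgs (fun l hl => (hminE l hl).2) hg d xs⟩
end

section
/- Thin-introduction law: let E : α → ℝ, let R : α → α → Prop, let xs be a nonempty list over α, and let ys be a sublist of xs such that (i) for every x in xs there exists y in ys with R y x, and (ii) R a b implies E a ≤ E b for all a, b. Then ys is nonempty and the minimum value of E over ys equals the minimum value of E over xs. -/
theorem csInf_image_eq_of_subset_of_forall_exists_le {α β : Type*}
    [ConditionallyCompleteLinearOrder β] {f : α → β} {s t : Set α} (hst : s ⊆ t)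
    (h : ∀ x ∈ t, ∃ y ∈ s, f y ≤ f x) :
    sInf (f '' s) = sInf (f '' t) := by
  refine csInf_eq_csInf_of_forall_exists_le ?_ ?_
  · rintro _ ⟨y, hy, rfl⟩
    exact ⟨f y, ⟨y, hst hy, rfl⟩, le_rfl⟩
  · rintro _ ⟨x, hx, rfl⟩
    obtain ⟨y, hy, hyx⟩ := h x hx
    exact ⟨f y, ⟨y, hy, rfl⟩, hyx⟩

/-- thin-introduction law. If `ys` is a sublist of the nonempty list `xs`
such that every `x ∈ xs` is dominated by some `y ∈ ys` (with `R a b → E a ≤ E b`),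
then `ys` is nonempty and the minimum value of `E` over `ys` equals that over `xs`. -/
theorem stmt4 {α : Type*} (E : α → ℝ) (R : α → α → Prop) (xs ys : List α)
    (hxs : xs ≠ []) (hsub : ys.Sublist xs)
    (hthin : ∀ x ∈ xs, ∃ y ∈ ys, R y x)
    (hdom : ∀ a b, R a b → E a ≤ E b) :
    ys ≠ [] ∧ sInf (E '' {x | x ∈ ys}) = sInf (E '' {x | x ∈ xs}) := by
  obtain ⟨x₀, hx₀⟩ := List.exists_mem_of_ne_nil xs hxs
  obtain ⟨y₀, hy₀, -⟩ := hthin x₀ hx₀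
  refine ⟨List.ne_nil_of_mem hy₀, csInf_image_eq_of_subset_of_forall_exists_le
    (fun _ hy ↦ hsub.subset hy) fun x hx ↦ ?_⟩
  obtain ⟨y, hy, hyx⟩ := hthin x hx
  exact ⟨y, hy, hdom y x hyx⟩
end

section
/- K-means lower bound for regression trees: let x : Fin N → ℝ^D be data points with labels y : Fin N → ℝ, and let K : ℕ. Then for every prediction tree t over ℝ^D with exactly K internal nodes, the squared loss ∑ᵢ (y i − t(x i))² is at least kmeans(K+1, y), the optimal 1-dimensional (K+1)-means clustering cost of the labels. -/
open Classical

/-- Prediction trees over `ℝ^D`: a leaf carries a real prediction, a node carries two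
subtrees and a split, given as a subset `r⁺ ⊆ ℝ^D`. -/
inductive PTree (D : ℕ) where
  | leaf : ℝ → PTree D
  | node : PTree D → Set (Fin D → ℝ) → PTree D → PTree D

/-- The prediction of a tree on a point. -/
noncomputable def PTree.pred {D : ℕ} : PTree D → (Fin D → ℝ) → ℝ
  | .leaf p, _ => p
  | .node u r v, z => if z ∈ r then u.pred z else v.pred z

/-- Number of internal nodes. -/
def PTree.size {D : ℕ} : PTree D → ℕ
  | .leaf _ => 0
  | .node u _ v => u.size + v.size + 1

/-- Optimal 1-dimensional `k`-means clustering cost of the labels `y`. -/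
noncomputable def kmeansCost (N k : ℕ) (y : Fin N → ℝ) : ℝ :=
  sInf {v : ℝ | ∃ (c : Fin N → Fin k) (μ : Fin k → ℝ), v = ∑ i, (y i - μ (c i)) ^ 2}

/-!
A tree with `K` internal nodes has `K + 1` leaves, and its prediction at every point is the
value of one of them. Hence the leaf values serve as `K + 1` centers, and sending each label
to the leaf its data point falls into is a feasible clustering whose cost is the tree's loss.
-/

namespace PTree

variable {D : ℕ}

def leafValues : PTree D → List ℝ
  | .leaf p => [p]
  | .node u _ v => u.leafValues ++ v.leafValues

theorem length_leafValues (t : PTree D) : t.leafValues.length = t.size + 1 := by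
  induction t with
  | leaf p => rfl
  | node u r v ihu ihv =>
    simp only [leafValues, size, List.length_append, ihu, ihv]
    omega

theorem pred_mem_leafValues (t : PTree D) (z : Fin D → ℝ) : t.pred z ∈ t.leafValues := by
  induction t with
  | leaf p => simp [pred, leafValues]
  | node u r v ihu ihv =>
    by_cases hz : z ∈ r
    · simp [pred, leafValues, hz, ihu]
    · simp [pred, leafValues, hz, ihv]

theorem exists_pred_eq_leafValues (t : PTree D) (z : Fin D → ℝ) :
    ∃ j : Fin (t.size + 1), t.pred z = t.leafValues[j]'(by rw [length_leafValues]; exact j.2) := by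
  obtain ⟨j, hj⟩ := List.getElem_of_mem (t.pred_mem_leafValues z)
  exact ⟨⟨j, by rw [← length_leafValues]; exact hj.1⟩, hj.2.symm⟩

end PTree

theorem kmeansCost_le_of_forall_exists_eq {N k : ℕ} (y p : Fin N → ℝ) (μ : Fin k → ℝ)
    (hp : ∀ i, ∃ j, p i = μ j) : kmeansCost N k y ≤ ∑ i, (y i - p i) ^ 2 := by
  choose c hc using hp
  refine csInf_le ⟨0, ?_⟩ ⟨c, μ, by simp only [hc]⟩
  rintro _ ⟨_, _, rfl⟩
  positivity

/-- K-means lower bound for regression trees. -/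
theorem stmt8 {N D : ℕ} (K : ℕ) (x : Fin N → Fin D → ℝ) (y : Fin N → ℝ)
    (t : PTree D) (ht : t.size = K) :
    kmeansCost N (K + 1) y ≤ ∑ i, (y i - t.pred (x i)) ^ 2 := by
  subst ht
  exact kmeansCost_le_of_forall_exists_eq y _ _ fun i => t.exists_pred_eq_leafValues (x i)
end

section
/- Existence of a vanishing hypersurface: let D, M : ℕ and let S be a finite set of points in ℝ^D with cardinality strictly less than C(D+M, D). Then there exists a nonzero polynomial P ∈ ℝ[x₁, …, x_D] of total degree at most M such that P vanishes at every point of S. -/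
/-!
Evaluation at the points of `S` is a linear map from the space of polynomials of total degree
at most `M` to `K^S`. The monomials of total degree at most `M` in `d` variables correspond, via
a slack exponent `M - ∑ i, αᵢ`, to multisets of size `M` on `d + 1` letters, so this space has
dimension `(d + M).choose M`. When this exceeds `#S` the evaluation map has a nonzero kernel.
-/

open MvPolynomial Module Finset

variable {σ : Type*} [Fintype σ]

def sumLeEquivSumOptionEq (M : ℕ) :
    {f : σ → ℕ // ∑ i, f i ≤ M} ≃ {g : Option σ → ℕ // ∑ o, g o = M} where
  toFun f := ⟨fun o => o.elim (M - ∑ i, f.1 i) f.1, by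
    simpa [Fintype.sum_option] using Nat.sub_add_cancel f.2⟩
  invFun g := ⟨fun i => g.1 (some i), by
    have := g.2
    rw [Fintype.sum_option] at this
    exact (Nat.le_add_left _ _).trans_eq this⟩
  left_inv _ := rfl
  right_inv g := by
    have := g.2
    rw [Fintype.sum_option] at this
    ext (_ | i)
    · simp only [Option.elim_none]; omega
    · rfl

theorem card_sum_le_eq_choose (M : ℕ) :
    Nat.card {f : σ → ℕ // ∑ i, f i ≤ M} = (Fintype.card σ + M).choose M := by
  classical
  rw [Nat.card_congr ((sumLeEquivSumOptionEq M).trans (Sym.equivNatSumOfFintype _ M).symm),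
    Sym.natCard_sym_eq_choose, Nat.card_eq_fintype_card, Fintype.card_option,
    Nat.add_right_comm, Nat.add_sub_cancel]

theorem finrank_restrictTotalDegree (R : Type*) [CommRing R] [StrongRankCondition R] (M : ℕ) :
    finrank R (restrictTotalDegree σ R M) = (Fintype.card σ + M).choose M := by
  rw [restrictTotalDegree, finrank_eq_nat_card_basis (basisRestrictSupport R _),
    ← card_sum_le_eq_choose M]
  refine Nat.card_congr (Finsupp.equivFunOnFinite.subtypeEquiv fun n => ?_)
  simp [Finsupp.sum_fintype]

theorem exists_ne_zero_totalDegree_le_forall_eval_eq_zero {K : Type*} [Field K] (M : ℕ)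
    (S : Finset (σ → K)) (hS : #S < (Fintype.card σ + M).choose M) :
    ∃ P : MvPolynomial σ K, P ≠ 0 ∧ P.totalDegree ≤ M ∧ ∀ x ∈ S, eval x P = 0 := by
  let evalOnS : restrictTotalDegree σ K M →ₗ[K] S → K :=
    LinearMap.pi fun x => (aeval x.1).toLinearMap ∘ₗ Submodule.subtype _
  have hker : LinearMap.ker evalOnS ≠ ⊥ :=
    LinearMap.ker_ne_bot_of_finrank_lt (by
      rwa [finrank_restrictTotalDegree, Module.finrank_fintype_fun_eq_card, Fintype.card_coe])
  obtain ⟨⟨P, hP⟩, hPker, hP0⟩ := Submodule.exists_mem_ne_zero_of_ne_bot hker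
  refine ⟨P, fun h => hP0 (Subtype.ext h), (mem_restrictTotalDegree _ _ _).mp hP, fun x hx => ?_⟩
  exact congrFun (LinearMap.mem_ker.mp hPker) ⟨x, hx⟩

/-- existence of a vanishing hypersurface. If a finite set `S ⊆ ℝ^D` has
fewer than `(D + M).choose D` points, there is a nonzero polynomial of total degree at
most `M` vanishing on `S`. -/
theorem stmt10 (D M : ℕ) (S : Finset (Fin D → ℝ))
    (hS : S.card < (D + M).choose D) :
    ∃ P : MvPolynomial (Fin D) ℝ, P ≠ 0 ∧ P.totalDegree ≤ M ∧
      ∀ x ∈ S, MvPolynomial.eval x P = 0 :=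
  exists_ne_zero_totalDegree_le_forall_eval_eq_zero M S <| by
    rwa [Fintype.card_fin, ← Nat.choose_symm_add]
end
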